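/- In the side-by-side example, under the assumption Γ = {γ : ℕ → A | ∃ n, γ n ≠ keep}, the constant-keep behavior is the only dominant one: a strategy s is dominant with respect to Γ if and only if s h = keep for every history h : List A. -/
import Mathlib


/-- Actions of a car: accelerate, keep speed, decelerate. -/
inductive A : Type
  | acc : A
  | keep : A
  | dec : A
deriving DecidableEq

/-- Ego's action at step `n` when following strategy `s : List A → A` against
the other car's input sequence `γ : ℕ → A`: `s [γ 0, …, γ (n−1)]`. -/
def ego (s : List A → A) (γ : ℕ → A) (n : ℕ) : A :=
  s (List.ofFn fun i : Fin n => γ i)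

/-- Objective φ₁: eventually the cars are not side by side, i.e., at some step
ego's and the other car's actions differ. -/
def phi1 (s : List A → A) (γ : ℕ → A) : Prop :=
  ∃ n, ego s γ n ≠ γ n

/-- Objective φ₂: ego always keeps its speed. -/
def phi2 (s : List A → A) (γ : ℕ → A) : Prop :=
  ∀ n, ego s γ n = A.keep

open Classical in
/-- Satisfaction level: `2` if φ₁ ∧ φ₂ hold, `1` if φ₁ holds and φ₂ fails,
`0` if φ₁ fails. -/
noncomputable def level (s : List A → A) (γ : ℕ → A) : ℕ :=
  if phi1 s γ ∧ phi2 s γ then 2 else if phi1 s γ then 1 else 0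

/-- The assumption that the other car eventually changes its speed. -/
def Gamma : Set (ℕ → A) := {γ | ∃ n, γ n ≠ A.keep}

/-- `s` is dominant with respect to the assumption `Γ`. -/
def DominantWrt (Γ : Set (ℕ → A)) (s : List A → A) : Prop :=
  ∀ t : List A → A, ∀ γ ∈ Γ, level t γ ≤ level s γ

lemma level_eq_two_of (s : List A → A) (γ : ℕ → A) (h1 : phi1 s γ) (h2 : phi2 s γ) :
    level s γ = 2 := by
  unfold level; rw [if_pos ⟨h1, h2⟩]

lemma level_const_keep (γ : ℕ → A) (hγ : γ ∈ Gamma) :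
    level (fun _ => A.keep) γ = 2 := by
  obtain ⟨n, hn⟩ := hγ
  apply level_eq_two_of
  · exact ⟨n, by simpa [ego] using fun h => hn h.symm⟩
  · intro n; rfl

/-- Under Γ = {γ | ∃ n, γ n ≠ keep}, the constant-keep behavior is the only
dominant one: `s` is dominant with respect to Γ iff `s h = keep` for every
history `h`. -/
theorem dominant_wrt_eventually_change_iff_const_keep :
    ∀ s : List A → A,
      DominantWrt Gamma s ↔ ∀ h : List A, s h = A.keep := by
  intro s
  constructor
  · intro hd h
    by_contra hne
    set γ : ℕ → A := fun i => if hi : i < h.length then h[i] else s h with hγdef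
    have hpre : (List.ofFn fun i : Fin h.length => γ i) = h := by
      apply List.ext_getElem
      · simp
      · intro i h1 h2
        simp [hγdef, List.getElem_ofFn]
    have hγΓ : γ ∈ Gamma := ⟨h.length, by simp [hγdef]; exact hne⟩
    have hego : ego s γ h.length = s h := by rw [ego, hpre]
    have hnot2 : ¬ phi2 s γ := fun hp => hne (hego ▸ hp h.length)
    have hle : level s γ ≤ 1 := by
      unfold level
      rw [if_neg (fun ⟨_, h2⟩ => hnot2 h2)]
      split <;> omega
    have := hd (fun _ => A.keep) γ hγΓ
    rw [level_const_keep γ hγΓ] at this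
    omega
  · intro hk t γ hγ
    have : level s γ = 2 := by
      apply level_eq_two_of
      · obtain ⟨n, hn⟩ := hγ
        exact ⟨n, by rw [ego, hk]; exact fun h => hn h.symm⟩
      · intro n; rw [ego, hk]
    rw [this]
    unfold level
    split
    · omega
    · split <;> omega
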